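/- The denominator 13x + y + z is strictly positive at every point of D, so B_0 is well defined on D; B_0 maps D bijectively onto D; and B_0 maps the boundary circle C onto C. -/

import Mathlib

open Real

/-- The rational map `B₀(x,y,z) = (9x, 2x+2y-z, 2x-y+2z)/(13x+y+z)`. -/
noncomputable def B0map (p : ℝ × ℝ × ℝ) : ℝ × ℝ × ℝ :=
  (9 * p.1 / (13 * p.1 + p.2.1 + p.2.2),
   (2 * p.1 + 2 * p.2.1 - p.2.2) / (13 * p.1 + p.2.1 + p.2.2),
   (2 * p.1 - p.2.1 + 2 * p.2.2) / (13 * p.1 + p.2.1 + p.2.2))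

/-- The closed disk `D` of radius `1/√6` centered at `(1/3,1/3,1/3)` in the plane
`x + y + z = 1`. -/
def Ddisk : Set (ℝ × ℝ × ℝ) :=
  {p | p.1 + p.2.1 + p.2.2 = 1 ∧
    (p.1 - 1 / 3) ^ 2 + (p.2.1 - 1 / 3) ^ 2 + (p.2.2 - 1 / 3) ^ 2 ≤ 1 / 6}

/-- The boundary circle `C` of the disk `D`. -/
def Ccirc : Set (ℝ × ℝ × ℝ) :=
  {p | p.1 + p.2.1 + p.2.2 = 1 ∧
    (p.1 - 1 / 3) ^ 2 + (p.2.1 - 1 / 3) ^ 2 + (p.2.2 - 1 / 3) ^ 2 = 1 / 6}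

/-!
`B₀` is the projectivization `v ↦ M v / σ(M v)` of the linear map `M = [[9,0,0],[2,2,-1],[2,-1,2]]`,
where `σ` is the coordinate sum. On the plane `σ = 1`, the disk `D` and the circle `C` are the sets
where the quadratic form `K v = 2‖v‖² - σ(v)²` is `≤ 0`, resp. `= 0`, and `K (M v) = 9 K v`
identically; since `K` is homogeneous of degree 2, normalizing by `σ` does not change its sign.
Hence `B₀` maps `D` into `D` and `C` into `C`; `9 M⁻¹` has the same property, and its
projectivization is the inverse of `B₀` on `D`. All denominators are positive on `D` because
`0 ≤ x ≤ 2/3` there.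
-/

namespace B0map

def coordSum (v : ℝ × ℝ × ℝ) : ℝ := v.1 + v.2.1 + v.2.2

def circleForm (v : ℝ × ℝ × ℝ) : ℝ := 2 * (v.1 ^ 2 + v.2.1 ^ 2 + v.2.2 ^ 2) - coordSum v ^ 2

noncomputable def normalize (v : ℝ × ℝ × ℝ) : ℝ × ℝ × ℝ := (coordSum v)⁻¹ • v

def linear : (ℝ × ℝ × ℝ) →ₗ[ℝ] ℝ × ℝ × ℝ where
  toFun v := (9 * v.1, 2 * v.1 + 2 * v.2.1 - v.2.2, 2 * v.1 - v.2.1 + 2 * v.2.2)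
  map_add' v w := by ext <;> simp only [Prod.fst_add, Prod.snd_add] <;> ring
  map_smul' c v := by
    ext <;> simp only [Prod.smul_fst, Prod.smul_snd, smul_eq_mul, RingHom.id_apply] <;> ring

/-- `9 • linear⁻¹`; the scalar is invisible after `normalize`. -/
def linearInv : (ℝ × ℝ × ℝ) →ₗ[ℝ] ℝ × ℝ × ℝ where
  toFun v := (v.1, 6 * v.2.1 + 3 * v.2.2 - 2 * v.1, 3 * v.2.1 + 6 * v.2.2 - 2 * v.1)
  map_add' v w := by ext <;> simp only [Prod.fst_add, Prod.snd_add] <;> ring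
  map_smul' c v := by
    ext <;> simp only [Prod.smul_fst, Prod.smul_snd, smul_eq_mul, RingHom.id_apply] <;> ring

noncomputable def inv (p : ℝ × ℝ × ℝ) : ℝ × ℝ × ℝ := normalize (linearInv p)

theorem coordSum_smul (c : ℝ) (v : ℝ × ℝ × ℝ) : coordSum (c • v) = c * coordSum v := by
  simp only [coordSum, Prod.smul_fst, Prod.smul_snd, smul_eq_mul]; ring

theorem circleForm_smul (c : ℝ) (v : ℝ × ℝ × ℝ) :
    circleForm (c • v) = c ^ 2 * circleForm v := by
  simp only [circleForm, coordSum_smul, Prod.smul_fst, Prod.smul_snd, smul_eq_mul]; ring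

theorem coordSum_normalize {v : ℝ × ℝ × ℝ} (h : coordSum v ≠ 0) :
    coordSum (normalize v) = 1 := by
  rw [normalize, coordSum_smul, inv_mul_cancel₀ h]

theorem normalize_smul {c : ℝ} (hc : c ≠ 0) (v : ℝ × ℝ × ℝ) :
    normalize (c • v) = normalize v := by
  rw [normalize, normalize, coordSum_smul, smul_smul, mul_inv_rev, mul_assoc, inv_mul_cancel₀ hc,
    mul_one]

theorem normalize_of_coordSum_eq_one {v : ℝ × ℝ × ℝ} (h : coordSum v = 1) :
    normalize v = v := by
  rw [normalize, h, inv_one, one_smul]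

theorem normalize_map_normalize (f : (ℝ × ℝ × ℝ) →ₗ[ℝ] ℝ × ℝ × ℝ) {v : ℝ × ℝ × ℝ}
    (h : coordSum v ≠ 0) : normalize (f (normalize v)) = normalize (f v) := by
  rw [normalize.eq_1 v, map_smul, normalize_smul (inv_ne_zero h)]

theorem coordSum_linear (v : ℝ × ℝ × ℝ) :
    coordSum (linear v) = 13 * v.1 + v.2.1 + v.2.2 := by
  simp only [coordSum, linear, LinearMap.coe_mk, AddHom.coe_mk]; ring

theorem coordSum_linearInv (v : ℝ × ℝ × ℝ) :
    coordSum (linearInv v) = 9 * v.2.1 + 9 * v.2.2 - 3 * v.1 := by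
  simp only [coordSum, linearInv, LinearMap.coe_mk, AddHom.coe_mk]; ring

theorem circleForm_linear (v : ℝ × ℝ × ℝ) : circleForm (linear v) = 9 * circleForm v := by
  simp only [circleForm, coordSum, linear, LinearMap.coe_mk, AddHom.coe_mk]; ring

theorem circleForm_linearInv (v : ℝ × ℝ × ℝ) : circleForm (linearInv v) = 9 * circleForm v := by
  simp only [circleForm, coordSum, linearInv, LinearMap.coe_mk, AddHom.coe_mk]; ring

theorem linearInv_linear (v : ℝ × ℝ × ℝ) : linearInv (linear v) = (9 : ℝ) • v := by
  ext <;> simp only [linear, linearInv, LinearMap.coe_mk, AddHom.coe_mk, Prod.smul_fst,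
    Prod.smul_snd, smul_eq_mul] <;> ring

theorem linear_linearInv (v : ℝ × ℝ × ℝ) : linear (linearInv v) = (9 : ℝ) • v := by
  ext <;> simp only [linear, linearInv, LinearMap.coe_mk, AddHom.coe_mk, Prod.smul_fst,
    Prod.smul_snd, smul_eq_mul] <;> ring

theorem eq_normalize_linear (p : ℝ × ℝ × ℝ) : B0map p = normalize (linear p) := by
  rw [normalize, coordSum_linear]
  ext <;> simp only [B0map, Prod.smul_fst, Prod.smul_snd, smul_eq_mul, linear, LinearMap.coe_mk,
    AddHom.coe_mk, div_eq_inv_mul]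

theorem sq_dist_center_sub_eq_half_circleForm {p : ℝ × ℝ × ℝ} (h : coordSum p = 1) :
    (p.1 - 1 / 3) ^ 2 + (p.2.1 - 1 / 3) ^ 2 + (p.2.2 - 1 / 3) ^ 2 - 1 / 6 = circleForm p / 2 := by
  rw [circleForm, h]
  unfold coordSum at h
  linear_combination (-(2 / 3) : ℝ) * h

theorem mem_Ddisk_iff {p : ℝ × ℝ × ℝ} : p ∈ Ddisk ↔ coordSum p = 1 ∧ circleForm p ≤ 0 :=
  and_congr_right fun h => by
    constructor <;> intro <;> linarith [sq_dist_center_sub_eq_half_circleForm h]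

theorem mem_Ccirc_iff {p : ℝ × ℝ × ℝ} : p ∈ Ccirc ↔ coordSum p = 1 ∧ circleForm p = 0 :=
  and_congr_right fun h => by
    constructor <;> intro <;> linarith [sq_dist_center_sub_eq_half_circleForm h]

theorem Ccirc_subset_Ddisk : Ccirc ⊆ Ddisk := fun _ hp => ⟨hp.1, hp.2.le⟩

theorem fst_mem_Icc_of_mem_Ddisk {p : ℝ × ℝ × ℝ} (hp : p ∈ Ddisk) :
    p.1 ∈ Set.Icc 0 (2 / 3) := by
  obtain ⟨hsum, hdist⟩ := hp
  constructor <;> nlinarith [sq_nonneg (p.2.1 - p.2.2)]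

theorem denom_pos {p : ℝ × ℝ × ℝ} (hp : p ∈ Ddisk) : 0 < 13 * p.1 + p.2.1 + p.2.2 := by
  linarith [hp.1, (fst_mem_Icc_of_mem_Ddisk hp).1]

theorem coordSum_linear_pos {p : ℝ × ℝ × ℝ} (hp : p ∈ Ddisk) : 0 < coordSum (linear p) := by
  rw [coordSum_linear]
  exact denom_pos hp

theorem coordSum_linearInv_pos {p : ℝ × ℝ × ℝ} (hp : p ∈ Ddisk) :
    0 < coordSum (linearInv p) := by
  rw [coordSum_linearInv]
  linarith [hp.1, (fst_mem_Icc_of_mem_Ddisk hp).2]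

theorem normalize_mem_Ddisk {v : ℝ × ℝ × ℝ} (h : coordSum v ≠ 0) (hv : circleForm v ≤ 0) :
    normalize v ∈ Ddisk := by
  refine mem_Ddisk_iff.2 ⟨coordSum_normalize h, ?_⟩
  rw [normalize, circleForm_smul]
  exact mul_nonpos_of_nonneg_of_nonpos (sq_nonneg _) hv

theorem normalize_mem_Ccirc {v : ℝ × ℝ × ℝ} (h : coordSum v ≠ 0) (hv : circleForm v = 0) :
    normalize v ∈ Ccirc := by
  refine mem_Ccirc_iff.2 ⟨coordSum_normalize h, ?_⟩
  rw [normalize, circleForm_smul, hv, mul_zero]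

theorem mapsTo_Ddisk : Set.MapsTo B0map Ddisk Ddisk := fun p hp => by
  rw [eq_normalize_linear]
  refine normalize_mem_Ddisk (coordSum_linear_pos hp).ne' ?_
  linarith [circleForm_linear p, (mem_Ddisk_iff.1 hp).2]

theorem mapsTo_inv_Ddisk : Set.MapsTo inv Ddisk Ddisk := fun p hp => by
  refine normalize_mem_Ddisk (coordSum_linearInv_pos hp).ne' ?_
  linarith [circleForm_linearInv p, (mem_Ddisk_iff.1 hp).2]

theorem mapsTo_Ccirc : Set.MapsTo B0map Ccirc Ccirc := fun p hp => by
  rw [eq_normalize_linear]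
  exact normalize_mem_Ccirc (coordSum_linear_pos (Ccirc_subset_Ddisk hp)).ne'
    (by rw [circleForm_linear, (mem_Ccirc_iff.1 hp).2, mul_zero])

theorem mapsTo_inv_Ccirc : Set.MapsTo inv Ccirc Ccirc := fun p hp =>
  normalize_mem_Ccirc (coordSum_linearInv_pos (Ccirc_subset_Ddisk hp)).ne'
    (by rw [circleForm_linearInv, (mem_Ccirc_iff.1 hp).2, mul_zero])

theorem invOn_Ddisk : Set.InvOn inv B0map Ddisk Ddisk := by
  constructor
  · intro p hp
    rw [inv, eq_normalize_linear, normalize_map_normalize _ (coordSum_linear_pos hp).ne',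
      linearInv_linear, normalize_smul (by norm_num), normalize_of_coordSum_eq_one hp.1]
  · intro p hp
    rw [inv, eq_normalize_linear, normalize_map_normalize _ (coordSum_linearInv_pos hp).ne',
      linear_linearInv, normalize_smul (by norm_num), normalize_of_coordSum_eq_one hp.1]

end B0map

/-- The denominator `13x + y + z` is strictly positive at every point of `D` (so `B₀`
is well defined on `D`); `B₀` maps `D` bijectively onto `D`; and `B₀` maps the
boundary circle `C` onto `C`. -/
theorem stmt_17 :
    (∀ p ∈ Ddisk, 0 < 13 * p.1 + p.2.1 + p.2.2) ∧
    Set.BijOn B0map Ddisk Ddisk ∧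
    B0map '' Ccirc = Ccirc := by
  have hD := B0map.invOn_Ddisk
  have hC := hD.mono B0map.Ccirc_subset_Ddisk B0map.Ccirc_subset_Ddisk
  exact ⟨fun _ => B0map.denom_pos, hD.bijOn B0map.mapsTo_Ddisk B0map.mapsTo_inv_Ddisk,
    (hC.bijOn B0map.mapsTo_Ccirc B0map.mapsTo_inv_Ccirc).image_eq⟩
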